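/- Existence and uniqueness for the matrix Dyson equation. For every N ≥ 1, every matrix 𝒜 ∈ ℂ^{N×N}, and every ẑ ∈ ℂ with Im ẑ > 0, there is exactly one invertible matrix M ∈ ℂ^{2N×2N} whose imaginary part Im M := (M − M*)/(2i) is positive definite and which satisfies the matrix Dyson equation −M^{-1} = −H_𝒜 + ẑ·I + ⟨M⟩·I, where H_𝒜 is the Hermitization of 𝒜 and ⟨M⟩ := (2N)^{-1} Tr M is the normalized trace. -/

import Mathlib

open MeasureTheory ProbabilityTheory Matrix Polynomial
open scoped ComplexOrder NNReal ENNReal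

noncomputable section

/-- The Hermitization `[[0, B], [Bᴴ, 0]]` of an `N × N` complex matrix `B`. -/
def hermitize {N : ℕ} (B : Matrix (Fin N) (Fin N) ℂ) :
    Matrix (Fin N ⊕ Fin N) (Fin N ⊕ Fin N) ℂ :=
  Matrix.fromBlocks 0 B Bᴴ 0

/-- Normalized trace `⟨M⟩ = d⁻¹ Tr M`. -/
def ntrace {ι : Type} [Fintype ι] (M : Matrix ι ι ℂ) : ℂ :=
  M.trace / (Fintype.card ι : ℂ)

/-- `|B|² = Bᴴ B`. -/
def absSq {N : ℕ} (B : Matrix (Fin N) (Fin N) ℂ) : Matrix (Fin N) (Fin N) ℂ :=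
  Bᴴ * B

/-- The (matrix) imaginary part `Im M = (M - Mᴴ)/(2i)`. -/
def imPart {ι : Type} [Fintype ι] (M : Matrix ι ι ℂ) : Matrix ι ι ℂ :=
  (2 * Complex.I)⁻¹ • (M - Mᴴ)

/-- The `ℓ² → ℓ²` operator norm of a matrix. -/
def opNorm {ι : Type} [Fintype ι] [DecidableEq ι] (M : Matrix ι ι ℂ) : ℝ :=
  ‖LinearMap.toContinuousLinearMap (Matrix.toEuclideanLin M)‖

/-- `M` is a solution of the matrix Dyson equation
`-M⁻¹ = -H_𝒜 + ẑ·I + ⟨M⟩·I` with positive definite imaginary part. -/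
def IsMDESolution {N : ℕ} (𝒜 : Matrix (Fin N) (Fin N) ℂ) (zhat : ℂ)
    (M : Matrix (Fin N ⊕ Fin N) (Fin N ⊕ Fin N) ℂ) : Prop :=
  IsUnit M.det ∧ (imPart M).PosDef ∧
    M⁻¹ = hermitize 𝒜 - zhat • (1 : Matrix (Fin N ⊕ Fin N) (Fin N ⊕ Fin N) ℂ) - ntrace M • 1

/-- A choice of solution of the matrix Dyson equation. -/
def mdeSol {N : ℕ} (𝒜 : Matrix (Fin N) (Fin N) ℂ) (zhat : ℂ) :
    Matrix (Fin N ⊕ Fin N) (Fin N ⊕ Fin N) ℂ :=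
  Classical.epsilon fun M => IsMDESolution 𝒜 zhat M

/-- Partial derivative in the real direction. -/
def pdx (F : ℂ → ℝ) (z : ℂ) : ℝ := deriv (fun s : ℝ => F (z + (s : ℂ))) 0

/-- Partial derivative in the imaginary direction. -/
def pdy (F : ℂ → ℝ) (z : ℂ) : ℝ := deriv (fun s : ℝ => F (z + (s : ℂ) * Complex.I)) 0

/-- The Laplacian `Δ = ∂²/∂x² + ∂²/∂y²` on `ℂ ≅ ℝ²`. -/
def cLap (F : ℂ → ℝ) (z : ℂ) : ℝ := pdx (pdx F) z + pdy (pdy F) z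

/-- Partial derivative in the real direction, complex-valued version. -/
def pdxC (F : ℂ → ℂ) (z : ℂ) : ℂ := deriv (fun s : ℝ => F (z + (s : ℂ))) 0

/-- Partial derivative in the imaginary direction, complex-valued version. -/
def pdyC (F : ℂ → ℂ) (z : ℂ) : ℂ := deriv (fun s : ℝ => F (z + (s : ℂ) * Complex.I)) 0

/-- The Laplacian on `ℂ`, complex-valued version. -/
def cLapC (F : ℂ → ℂ) (z : ℂ) : ℂ := pdxC (pdxC F) z + pdyC (pdyC F) z

/-- Wirtinger derivative `∂_z = (∂_x - i ∂_y)/2`. -/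
def wirtDz (F : ℂ → ℂ) (z : ℂ) : ℂ := (pdxC F z - Complex.I * pdyC F z) / 2

/-- Wirtinger derivative `∂_z̄ = (∂_x + i ∂_y)/2`. -/
def wirtDzBar (F : ℂ → ℂ) (z : ℂ) : ℂ := (pdxC F z + Complex.I * pdyC F z) / 2

/-- Laplacian in the `j`-th coordinate of a function of `k` complex variables. -/
def lapCoord {k : ℕ} (j : Fin k) (F : (Fin k → ℂ) → ℂ) (w : Fin k → ℂ) : ℂ :=
  cLapC (fun z => F (Function.update w j z)) (w j)

/-- The composition `Δ_{w₁} ⋯ Δ_{w_k}` of the coordinatewise Laplacians. -/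
def multiLap {k : ℕ} (F : (Fin k → ℂ) → ℂ) : (Fin k → ℂ) → ℂ :=
  (List.finRange k).foldr (fun j G => lapCoord j G) F

/-- Resolvent of the Hermitization of `Y` at the spectral parameter `iη`. -/
def resolv {N : ℕ} (Y : Matrix (Fin N) (Fin N) ℂ) (η : ℝ) :
    Matrix (Fin N ⊕ Fin N) (Fin N ⊕ Fin N) ℂ :=
  (hermitize Y - ((η : ℂ) * Complex.I) • 1)⁻¹

/-- `X` is an IID random matrix (real if `isReal`, complex if not) with moment
constants `cp`. -/
def IsIIDEntries {N : ℕ} {Ω : Type} [MeasurableSpace Ω] (μ : Measure Ω)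
    (X : Ω → Matrix (Fin N) (Fin N) ℂ) (cp : ℕ → ℝ) (isReal : Bool) : Prop :=
  (∀ i j, Measurable fun ω => X ω i j) ∧
  iIndepFun
    (fun p : Fin N × Fin N => fun ω => X ω p.1 p.2) μ ∧
  (∀ i j, ∫ ω, X ω i j ∂μ = 0) ∧
  (∀ i j, ∫ ω, (‖X ω i j‖) ^ 2 ∂μ = 1 / N) ∧
  (if isReal then ∀ ω i j, (X ω i j).im = 0
    else ∀ i j, ∫ ω, (X ω i j) ^ 2 ∂μ = 0) ∧
  (∀ p : ℕ, ∀ i j, ∫ ω, (Real.sqrt N * ‖X ω i j‖) ^ p ∂μ ≤ cp p)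

/-- The law of a centered complex Gaussian whose real and imaginary parts are
independent real Gaussians of variance `v`. -/
def complexGaussian (v : ℝ≥0) : Measure ℂ :=
  Measure.map (fun p : ℝ × ℝ => (p.1 : ℂ) + (p.2 : ℂ) * Complex.I)
    ((gaussianReal 0 v).prod (gaussianReal 0 v))

/-- `X` is a Ginibre random matrix (real if `isReal`, complex if not). -/
def IsGinibre {N : ℕ} {Ω : Type} [MeasurableSpace Ω] (μ : Measure Ω)
    (X : Ω → Matrix (Fin N) (Fin N) ℂ) (isReal : Bool) : Prop :=
  (∀ i j, Measurable fun ω => X ω i j) ∧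
  iIndepFun
    (fun p : Fin N × Fin N => fun ω => X ω p.1 p.2) μ ∧
  (∀ i j, Measure.map (fun ω => X ω i j) μ =
    if isReal then Measure.map (fun x : ℝ => (x : ℂ)) (gaussianReal 0 (N : ℝ≥0)⁻¹)
    else complexGaussian ((2 * N : ℝ≥0))⁻¹)

/-- The domain `D_C` of regular sharp-edge candidates. -/
def edgeDomain {N : ℕ} (A : Matrix (Fin N) (Fin N) ℂ) (C : ℝ) : Set ℂ :=
  {z | IsUnit (A - z • 1).det ∧ opNorm ((A - z • 1)⁻¹) < C ∧
    1 / C < (1 + ‖z‖) ^ 3 *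
      ‖ntrace ((absSq (A - z • 1))⁻¹ * (absSq (A - z • 1))⁻¹ * (A - z • 1))‖}

/-- `I₃ = ⟨|B|⁻⁴ B*⟩`. -/
def I3m {N : ℕ} (B : Matrix (Fin N) (Fin N) ℂ) : ℂ :=
  ntrace ((absSq B)⁻¹ * (absSq B)⁻¹ * Bᴴ)

/-- `I₄ = ⟨|B|⁻⁴⟩`. -/
def I4m {N : ℕ} (B : Matrix (Fin N) (Fin N) ℂ) : ℂ :=
  ntrace ((absSq B)⁻¹ * (absSq B)⁻¹)

/-- The rescaling parameter `γ₀ = -I₄^{-1/2} I₃`. -/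
def gamma0 {N : ℕ} (B : Matrix (Fin N) (Fin N) ℂ) : ℂ :=
  -((((I4m B).re ^ (-(1/2 : ℝ)) : ℝ) : ℂ) * I3m B)

/-- The rescaling parameter `c₀ = I₄^{-1/4}`. -/
def cScale {N : ℕ} (B : Matrix (Fin N) (Fin N) ℂ) : ℝ :=
  (I4m B).re ^ (-(1/4 : ℝ))

/-- The sharp-edge assumption (Assumption 2.5 of the paper) for the pair `(A, z₀)`
over the field `𝔽` (`isReal = true` for `𝔽 = ℝ`). -/
def SharpEdge {N : ℕ} (A : Matrix (Fin N) (Fin N) ℂ) (z₀ : ℂ)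
    (C₁ C₂ 𝔠 : ℝ) (isReal : Bool) : Prop :=
  ntrace ((absSq (A - z₀ • 1))⁻¹) = 1 ∧ z₀ ∈ edgeDomain A C₁ ∧
  (if isReal then
    ((((N : ℝ) ^ (-(1/2 : ℝ) + 𝔠) ≤ |z₀.im|) →
        ¬ Bornology.IsBounded
          (connectedComponentIn (edgeDomain A C₂ ∩ {z : ℂ | z.im ≠ 0}) z₀)) ∧
     ((|z₀.im| ≤ (N : ℝ) ^ (-(1/2 : ℝ) + 𝔠)) →
        ¬ Bornology.IsBounded
          (connectedComponentIn {x : ℝ | (x : ℂ) ∈ edgeDomain A C₂} z₀.re)))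
  else
    ¬ Bornology.IsBounded (connectedComponentIn (edgeDomain A C₂) z₀))

/-- The eigenvalues of `B`, with algebraic multiplicity, as a list. -/
def eigList {N : ℕ} (B : Matrix (Fin N) (Fin N) ℂ) : List ℂ :=
  (Matrix.charpoly B).roots.toList

/-- The sum of `F(φ(σ_{i₁}), …, φ(σ_{i_k}))` over all `k`-tuples of pairwise
distinct indices, where `σ₁, …, σ_N` are the eigenvalues of `B` with multiplicity. -/
def kPointSum {k N : ℕ} (F : (Fin k → ℂ) → ℂ) (φ : ℂ → ℂ)
    (B : Matrix (Fin N) (Fin N) ℂ) : ℂ :=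
  ∑ f ∈ Finset.univ.filter (fun f : Fin k → Fin N => Function.Injective f),
    F fun j => φ ((eigList B).getD ((f j : ℕ)) 0)

/-- The regularized log-determinant statistic
`2N ∫_η^∞ Im[⟨(H_Y - iu)⁻¹⟩ - ⟨M_𝒜(iu)⟩] du`. -/
def Lstat {N : ℕ} (Y 𝒜 : Matrix (Fin N) (Fin N) ℂ) (η : ℝ) : ℝ :=
  2 * N * ∫ u in Set.Ioi η,
    ((ntrace (resolv Y u)).im - (ntrace (mdeSol 𝒜 ((u : ℂ) * Complex.I))).im)

/-- The regularized smallest-singular-value statistic `⟨η(|Y|² + η²)⁻¹⟩`. -/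
def Nstat {N : ℕ} (Y : Matrix (Fin N) (Fin N) ℂ) (η : ℝ) : ℝ :=
  (ntrace ((η : ℂ) • (absSq Y + ((η : ℂ) ^ 2) • 1)⁻¹)).re

/-- The path assumption (Assumption 4.4 of the paper) with constant `C₅`:
a piecewise `C¹` path of deformations keeping the origin a sharp edge. -/
def PathAssumption {N : ℕ} (𝒜 : ℝ → Matrix (Fin N) (Fin N) ℂ)
    (A₀ : Matrix (Fin N) (Fin N) ℂ) (z₁ : ℂ) (C₅ : ℝ) : Prop :=
  (∀ i j, ContinuousOn (fun t => 𝒜 t i j) (Set.Icc 0 1)) ∧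
  𝒜 0 = A₀ ∧ 𝒜 1 = (-z₁) • 1 ∧ ‖z₁‖ = 1 ∧
  (∀ t ∈ Set.Icc (0 : ℝ) 1, ntrace ((absSq (𝒜 t))⁻¹) = 1) ∧
  ∃ T : Finset ℝ, ∀ t ∈ Set.Icc (0 : ℝ) 1, t ∉ T →
    (∀ i j, DifferentiableAt ℝ (fun s => 𝒜 s i j) t) ∧
    IsUnit (𝒜 t).det ∧
    opNorm (𝒜 t) ≤ C₅ ∧ opNorm ((𝒜 t)⁻¹) ≤ C₅ ∧
    C₅⁻¹ ≤ ‖ntrace (𝒜 t * ((absSq (𝒜 t))⁻¹ * (absSq (𝒜 t))⁻¹))‖ ∧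
    ‖ntrace (𝒜 t * ((absSq (𝒜 t))⁻¹ * (absSq (𝒜 t))⁻¹))‖ ≤ C₅ ∧
    opNorm (Matrix.of fun i j => deriv (fun s => 𝒜 s i j) t) ≤ C₅ * Real.log N

/-- `θ_t = 1 - ⟨(𝒜_t 𝒜_tᵀ)⁻¹⟩` along a path of deformations. -/
def thetaPath {N : ℕ} (𝒜 : ℝ → Matrix (Fin N) (Fin N) ℂ) (t : ℝ) : ℂ :=
  1 - ntrace ((𝒜 t * (𝒜 t)ᵀ)⁻¹)

/-- `ζ(w) = z₀ + γ₀⁻¹ N^{-1/2} w`. -/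
def zetaPt {N : ℕ} (A : Matrix (Fin N) (Fin N) ℂ) (z₀ : ℂ) (w : ℂ) : ℂ :=
  z₀ + (gamma0 (A - z₀ • 1))⁻¹ * ((((Real.sqrt (N : ℝ))⁻¹ : ℝ)) : ℂ) * w

/-- `η₁ = N^{-3/4-δ}`. -/
def eta1 (N : ℕ) (δ : ℝ) : ℝ := (N : ℝ) ^ (-(3/4 : ℝ) - δ)

/-- `η₀ = c₀⁻¹ η₁`. -/
def eta0 {N : ℕ} (A : Matrix (Fin N) (Fin N) ℂ) (z₀ : ℂ) (δ : ℝ) : ℝ :=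
  (cScale (A - z₀ • 1))⁻¹ * eta1 N δ

/-- The regularized log-determinant `L₀(w)` for the realization `Xm` of the
IID matrix, i.e. `Tr log(|A+Xm-ζ(w)|²+η₀²)` minus its deterministic counterpart,
written via the integral representation of the resolvent trace. -/
def L0stat {N : ℕ} (A Xm : Matrix (Fin N) (Fin N) ℂ) (z₀ : ℂ) (δ : ℝ) (w : ℂ) : ℝ :=
  Lstat (A + Xm - zetaPt A z₀ w • 1) (A - zetaPt A z₀ w • 1) (eta0 A z₀ δ)

/-- The regularized log-determinant `L₁^{Gin}(w)` for the realization `Xm`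
of the Ginibre matrix. -/
def L1stat {N : ℕ} (Xm : Matrix (Fin N) (Fin N) ℂ) (z₁ : ℂ) (δ : ℝ) (w : ℂ) : ℝ :=
  Lstat (Xm - (z₁ + z₁ * ((((Real.sqrt (N : ℝ))⁻¹ : ℝ)) : ℂ) * w) • 1)
    ((-(z₁ + z₁ * ((((Real.sqrt (N : ℝ))⁻¹ : ℝ)) : ℂ) * w)) • 1) (eta1 N δ)

/-- The regularized smallest-singular-value statistic
`N₀(w) = c₀⁻¹ ⟨η₀ (|A+Xm-ζ(w)|²+η₀²)⁻¹⟩`. -/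
def N0stat {N : ℕ} (A Xm : Matrix (Fin N) (Fin N) ℂ) (z₀ : ℂ) (δ : ℝ) (w : ℂ) : ℝ :=
  (cScale (A - z₀ • 1))⁻¹ * Nstat (A + Xm - zetaPt A z₀ w • 1) (eta0 A z₀ δ)

/-- The regularized smallest-singular-value statistic
`N₁^{Gin}(w) = ⟨η₁ (|Xm-z₁-z₁N^{-1/2}w|²+η₁²)⁻¹⟩`. -/
def N1stat {N : ℕ} (Xm : Matrix (Fin N) (Fin N) ℂ) (z₁ : ℂ) (δ : ℝ) (w : ℂ) : ℝ :=
  Nstat (Xm - (z₁ + z₁ * ((((Real.sqrt (N : ℝ))⁻¹ : ℝ)) : ℂ) * w) • 1) (eta1 N δ)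

set_option linter.unusedSectionVars false

namespace MDEAux

open Matrix Complex Finset

variable {ι : Type} [Fintype ι] [DecidableEq ι]

/-- The complex absolute value, as an absolute value. -/
def Complex.abs : AbsoluteValue ℂ ℝ where
  toFun z := ‖z‖
  map_mul' := norm_mul
  nonneg' := norm_nonneg
  eq_zero' _ := norm_eq_zero
  add_le' := norm_add_le

lemma Complex.sq_abs (z : ℂ) : Complex.abs z ^ 2 = Complex.normSq z := Complex.sq_norm z

lemma Complex.abs_natCast (n : ℕ) : Complex.abs (n : ℂ) = n := Complex.norm_natCast n

lemma Complex.abs_apply (z : ℂ) : Complex.abs z = ‖z‖ := rfl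

@[simp] lemma Complex.abs_I : Complex.abs Complex.I = 1 := Complex.norm_I

lemma Complex.im_le_abs (z : ℂ) : z.im ≤ Complex.abs z := Complex.im_le_norm z

/-- Squared Frobenius norm of a complex matrix. -/
def frob (A : Matrix ι ι ℂ) : ℝ := ∑ i, ∑ j, Complex.abs (A i j) ^ 2

lemma frob_nonneg (A : Matrix ι ι ℂ) : 0 ≤ frob A :=
  Finset.sum_nonneg fun _ _ => Finset.sum_nonneg fun _ _ => sq_nonneg _

lemma frob_pos_of_ne_zero {A : Matrix ι ι ℂ} (hA : A ≠ 0) : 0 < frob A := by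
  rcases (frob_nonneg A).lt_or_eq with h | h
  · exact h
  · exfalso
    apply hA
    ext i j
    have h0 : ∀ i ∈ (univ : Finset ι), (0:ℝ) ≤ ∑ j, Complex.abs (A i j) ^ 2 :=
      fun _ _ => Finset.sum_nonneg fun _ _ => sq_nonneg _
    have h1 := (Finset.sum_eq_zero_iff_of_nonneg h0).mp h.symm i (mem_univ i)
    have h2 := (Finset.sum_eq_zero_iff_of_nonneg
      (fun _ _ => sq_nonneg _)).mp h1 j (mem_univ j)
    have h3 : Complex.abs (A i j) = 0 := by
      have := sq_eq_zero_iff.mp h2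
      simpa using this
    simpa using h3

lemma frob_one [Nonempty ι] : frob (1 : Matrix ι ι ℂ) = (Fintype.card ι : ℝ) := by
  unfold frob
  have : ∀ i : ι, ∑ j, Complex.abs ((1 : Matrix ι ι ℂ) i j) ^ 2 = 1 := by
    intro i
    rw [Finset.sum_eq_single i]
    · simp [Matrix.one_apply]
    · intro b _ hb
      simp [Matrix.one_apply, Ne.symm hb]
    · simp
  simp [this, Finset.card_univ]

lemma trace_mul_conjTranspose_self (A : Matrix ι ι ℂ) :
    (A * Aᴴ).trace = ((frob A : ℝ) : ℂ) := by
  unfold frob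
  push_cast
  simp only [Matrix.trace, Matrix.diag, Matrix.mul_apply, Matrix.conjTranspose_apply]
  refine Finset.sum_congr rfl fun i _ => Finset.sum_congr rfl fun j _ => ?_
  rw [← Complex.ofReal_pow, Complex.sq_abs, Complex.star_def]
  exact Complex.mul_conj _

lemma abs_trace_mul_sq_le (A B : Matrix ι ι ℂ) :
    Complex.abs ((A * B).trace) ^ 2 ≤ frob A * frob B := by
  have htr : (A * B).trace = ∑ p : ι × ι, A p.1 p.2 * B p.2 p.1 := by
    rw [Fintype.sum_prod_type]
    simp [Matrix.trace, Matrix.diag, Matrix.mul_apply]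
  have h1 : Complex.abs ((A * B).trace)
      ≤ ∑ p : ι × ι, Complex.abs (A p.1 p.2) * Complex.abs (B p.2 p.1) := by
    rw [htr]
    refine le_trans (Complex.abs.sum_le _ _) ?_
    refine le_of_eq (Finset.sum_congr rfl fun p _ => ?_)
    exact map_mul _ _ _
  have h2 := Finset.sum_mul_sq_le_sq_mul_sq Finset.univ
      (fun p : ι × ι => Complex.abs (A p.1 p.2)) (fun p => Complex.abs (B p.2 p.1))
  have hA : ∑ p : ι × ι, Complex.abs (A p.1 p.2) ^ 2 = frob A := by
    rw [Fintype.sum_prod_type]; rfl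
  have hB : ∑ p : ι × ι, Complex.abs (B p.2 p.1) ^ 2 = frob B := by
    rw [Fintype.sum_prod_type]
    rw [Finset.sum_comm]
    rfl
  have h3 : Complex.abs ((A * B).trace) ^ 2
      ≤ (∑ p : ι × ι, Complex.abs (A p.1 p.2) * Complex.abs (B p.2 p.1)) ^ 2 := by
    apply pow_le_pow_left₀ (Complex.abs.nonneg _) h1
  rw [hA, hB] at h2
  exact le_trans h3 h2

lemma star_dot (a b : ι → ℂ) : star (a ⬝ᵥ b) = star a ⬝ᵥ star b := by
  simp [dotProduct, star_sum, Pi.star_apply, mul_comm]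

lemma star_dot_self (v : ι → ℂ) :
    star v ⬝ᵥ v = ((∑ i, Complex.normSq (v i) : ℝ) : ℂ) := by
  push_cast
  refine Finset.sum_congr rfl fun i _ => ?_
  simp only [Pi.star_apply, Complex.star_def]
  rw [mul_comm, Complex.mul_conj]

lemma sum_normSq_pos {v : ι → ℂ} (hv : v ≠ 0) : 0 < ∑ i, Complex.normSq (v i) := by
  obtain ⟨i, hi⟩ := Function.ne_iff.mp hv
  refine Finset.sum_pos' (fun j _ => Complex.normSq_nonneg _) ⟨i, mem_univ i, ?_⟩
  simpa [Complex.normSq_pos] using hi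


section Herm

variable {H : Matrix ι ι ℂ}

lemma conjTranspose_sub_smul_one (hH : Hᴴ = H) (w : ℂ) :
    (H - w • (1 : Matrix ι ι ℂ))ᴴ = H - (starRingEnd ℂ w) • 1 := by
  rw [Matrix.conjTranspose_sub, Matrix.conjTranspose_smul, Matrix.conjTranspose_one, hH]
  rfl

lemma isUnit_det_sub_smul (hH : Hᴴ = H) {w : ℂ} (hw : w.im ≠ 0) :
    IsUnit (H - w • (1 : Matrix ι ι ℂ)).det := by
  rw [isUnit_iff_ne_zero]
  intro h0
  obtain ⟨v, hv, hveq⟩ := Matrix.exists_mulVec_eq_zero_iff.mpr h0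
  have hHv : H *ᵥ v = w • v := by
    have h := hveq
    rw [Matrix.sub_mulVec, Matrix.smul_mulVec, Matrix.one_mulVec, sub_eq_zero] at h
    exact h
  have hd : star v ⬝ᵥ (H *ᵥ v) = w * ((∑ i, Complex.normSq (v i) : ℝ) : ℂ) := by
    rw [hHv, dotProduct_smul, smul_eq_mul, star_dot_self]
  have hsd : star (star v ⬝ᵥ (H *ᵥ v)) = star v ⬝ᵥ (H *ᵥ v) := by
    rw [star_dot, star_star, Matrix.star_mulVec, hH, dotProduct_comm]
    exact (Matrix.dotProduct_mulVec _ _ _).symm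
  have him : (star v ⬝ᵥ (H *ᵥ v)).im = 0 := by
    have h2 := congrArg Complex.im hsd
    simp only [Complex.star_def, Complex.conj_im] at h2
    linarith
  rw [hd] at him
  simp only [Complex.mul_im, Complex.ofReal_im, Complex.ofReal_re, mul_zero, zero_add] at him
  have ht := sum_normSq_pos hv
  rcases mul_eq_zero.mp (by linarith : w.im * (∑ i, Complex.normSq (v i)) = 0) with h | h
  · exact hw h
  · exact absurd h (ne_of_gt ht)

lemma res_sub (hH : Hᴴ = H) {w₁ w₂ : ℂ} (h₁ : w₁.im ≠ 0) (h₂ : w₂.im ≠ 0) :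
    (H - w₁ • 1)⁻¹ - (H - w₂ • 1)⁻¹
      = (w₁ - w₂) • ((H - w₁ • 1)⁻¹ * (H - w₂ • 1)⁻¹) := by
  have hu₁ := isUnit_det_sub_smul hH h₁
  have hu₂ := isUnit_det_sub_smul hH h₂
  have hkey : (w₁ - w₂) • (1 : Matrix ι ι ℂ) = (H - w₂ • 1) - (H - w₁ • 1) := by
    rw [sub_sub_sub_cancel_left, sub_smul]
  calc (H - w₁ • 1)⁻¹ - (H - w₂ • 1)⁻¹
      = (H - w₁ • 1)⁻¹ * ((H - w₂ • 1) * (H - w₂ • 1)⁻¹)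
        - ((H - w₁ • 1)⁻¹ * (H - w₁ • 1)) * (H - w₂ • 1)⁻¹ := by
        rw [Matrix.mul_nonsing_inv _ hu₂, Matrix.nonsing_inv_mul _ hu₁,
          Matrix.mul_one, Matrix.one_mul]
    _ = (H - w₁ • 1)⁻¹ * ((((H - w₂ • 1) - (H - w₁ • 1))) * (H - w₂ • 1)⁻¹) := by
        noncomm_ring
    _ = (H - w₁ • 1)⁻¹ * (((w₁ - w₂) • (1 : Matrix ι ι ℂ)) * (H - w₂ • 1)⁻¹) := by
        rw [hkey]
    _ = (w₁ - w₂) • ((H - w₁ • 1)⁻¹ * (H - w₂ • 1)⁻¹) := by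
        rw [Matrix.smul_mul, Matrix.one_mul, Matrix.mul_smul]

lemma conjTranspose_res (hH : Hᴴ = H) (w : ℂ) :
    ((H - w • 1)⁻¹)ᴴ = (H - (starRingEnd ℂ w) • 1)⁻¹ := by
  rw [Matrix.conjTranspose_nonsing_inv, conjTranspose_sub_smul_one hH]

end Herm

section Sfun

variable [Nonempty ι] {H : Matrix ι ι ℂ}

/-- Normalized trace of the resolvent. -/
def sfun (H : Matrix ι ι ℂ) (w : ℂ) : ℂ :=
  ((H - w • 1)⁻¹).trace / (Fintype.card ι : ℂ)

/-- Normalized squared Frobenius norm of the resolvent. -/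
def gfun (H : Matrix ι ι ℂ) (w : ℂ) : ℝ :=
  frob ((H - w • 1)⁻¹) / (Fintype.card ι : ℝ)

lemma card_pos' : 0 < (Fintype.card ι : ℝ) := by
  exact_mod_cast Fintype.card_pos

lemma im_trace_res (hH : Hᴴ = H) {w : ℂ} (hw : w.im ≠ 0) :
    (((H - w • 1)⁻¹).trace).im = w.im * frob ((H - w • 1)⁻¹) := by
  have hcw : (starRingEnd ℂ w).im ≠ 0 := by
    simp only [Complex.conj_im]; exact neg_ne_zero.mpr hw
  have h := res_sub hH hw hcw
  rw [← conjTranspose_res hH] at h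
  have htr := congrArg Matrix.trace h
  rw [Matrix.trace_sub, Matrix.trace_smul, Matrix.trace_conjTranspose,
    trace_mul_conjTranspose_self] at htr
  set a := ((H - w • 1)⁻¹).trace
  set f := frob ((H - w • 1)⁻¹)
  have h1 : a - star a = (w - starRingEnd ℂ w) * (f : ℂ) := by
    simpa [smul_eq_mul] using htr
  have h2 := congrArg Complex.im h1
  simp only [Complex.sub_im, Complex.star_def, Complex.conj_im, Complex.mul_im,
    Complex.sub_re, Complex.conj_re, sub_self, zero_mul, Complex.ofReal_im, mul_zero,
    Complex.ofReal_re, add_zero, zero_add, sub_neg_eq_add] at h2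
  nlinarith [h2]

lemma im_sfun (hH : Hᴴ = H) {w : ℂ} (hw : w.im ≠ 0) :
    (sfun H w).im = w.im * gfun H w := by
  unfold sfun gfun
  have hn : ((Fintype.card ι : ℂ)) = ((Fintype.card ι : ℝ) : ℂ) := by push_cast; ring
  rw [hn, div_eq_mul_inv, ← Complex.ofReal_inv]
  rw [Complex.mul_im]
  simp only [Complex.ofReal_im, Complex.ofReal_re, mul_zero, zero_add, add_zero]
  rw [im_trace_res hH hw]
  field_simp

lemma res_ne_zero {w : ℂ} (hw : IsUnit (H - w • (1 : Matrix ι ι ℂ)).det) :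
    (H - w • (1 : Matrix ι ι ℂ))⁻¹ ≠ 0 := by
  intro h0
  have h1 := Matrix.nonsing_inv_mul _ hw
  rw [h0, Matrix.zero_mul] at h1
  have := congrFun (congrFun h1 (Classical.arbitrary ι)) (Classical.arbitrary ι)
  simp [Matrix.one_apply] at this

lemma gfun_pos (hH : Hᴴ = H) {w : ℂ} (hw : w.im ≠ 0) : 0 < gfun H w :=
  div_pos (frob_pos_of_ne_zero (res_ne_zero (isUnit_det_sub_smul hH hw))) card_pos'

lemma abs_sfun_sq_le {w : ℂ} : Complex.abs (sfun H w) ^ 2 ≤ gfun H w := by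
  have h := abs_trace_mul_sq_le ((H - w • 1)⁻¹) (1 : Matrix ι ι ℂ)
  rw [Matrix.mul_one, frob_one] at h
  unfold sfun gfun
  have hn := card_pos' (ι := ι)
  rw [map_div₀, div_pow]
  have hcc : Complex.abs ((Fintype.card ι : ℂ)) = (Fintype.card ι : ℝ) := by
    rw [Complex.abs_natCast]
  rw [hcc]
  rw [div_le_div_iff₀ (by positivity) hn]
  calc Complex.abs (((H - w • 1)⁻¹).trace) ^ 2 * (Fintype.card ι : ℝ)
      ≤ frob ((H - w • 1)⁻¹) * (Fintype.card ι : ℝ) * (Fintype.card ι : ℝ) := by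
        nlinarith [h, hn, sq_nonneg (Complex.abs (((H - w • 1)⁻¹).trace))]
    _ = frob ((H - w • 1)⁻¹) * ((Fintype.card ι : ℝ) ^ 2) := by ring

lemma abs_sfun_le (hH : Hᴴ = H) {w : ℂ} (hw : 0 < w.im) :
    Complex.abs (sfun H w) ≤ 1 / w.im := by
  have h1 := abs_sfun_sq_le (H := H) (w := w)
  have h2 : gfun H w = (sfun H w).im / w.im := by
    rw [im_sfun hH (ne_of_gt hw)]; field_simp
  have h3 : (sfun H w).im ≤ Complex.abs (sfun H w) := Complex.im_le_abs _
  set x := Complex.abs (sfun H w) with hx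
  have hx0 : 0 ≤ x := Complex.abs.nonneg _
  have h4 : x ^ 2 ≤ x / w.im := by
    rw [h2] at h1
    refine le_trans h1 ?_
    gcongr
  rcases hx0.lt_or_eq with hxpos | hxzero
  · rw [le_div_iff₀ hw]
    have h5 : x ^ 2 * w.im ≤ x := (le_div_iff₀ hw).mp h4
    nlinarith [h5, hxpos, hw]
  · rw [← hxzero]
    positivity

lemma gfun_le (hH : Hᴴ = H) {w : ℂ} (hw : 0 < w.im) : gfun H w ≤ 1 / w.im ^ 2 := by
  have h2 : gfun H w = (sfun H w).im / w.im := by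
    rw [im_sfun hH (ne_of_gt hw)]; field_simp
  have h3 : (sfun H w).im ≤ 1 / w.im :=
    le_trans (Complex.im_le_abs _) (abs_sfun_le hH hw)
  rw [h2]
  calc (sfun H w).im / w.im ≤ (1 / w.im) / w.im := by gcongr
    _ = 1 / w.im ^ 2 := by field_simp

lemma frob_sub_smul_le (H : Matrix ι ι ℂ) (w : ℂ) :
    frob (H - w • 1) ≤ 2 * frob H + 2 * (Fintype.card ι : ℝ) * Complex.abs w ^ 2 := by
  unfold frob
  have key : ∀ i j, Complex.abs ((H - w • 1) i j) ^ 2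
      ≤ 2 * Complex.abs (H i j) ^ 2 + 2 * Complex.abs ((w • (1 : Matrix ι ι ℂ)) i j) ^ 2 := by
    intro i j
    have h1 : Complex.abs ((H - w • 1) i j)
        ≤ Complex.abs (H i j) + Complex.abs ((w • (1 : Matrix ι ι ℂ)) i j) := by
      have : (H - w • 1) i j = H i j - (w • (1 : Matrix ι ι ℂ)) i j := rfl
      rw [this]
      exact Complex.abs.sub_le_add _ _
    nlinarith [Complex.abs.nonneg ((H - w • 1) i j), Complex.abs.nonneg (H i j),
      Complex.abs.nonneg ((w • (1 : Matrix ι ι ℂ)) i j), h1,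
      sq_nonneg (Complex.abs (H i j) - Complex.abs ((w • (1 : Matrix ι ι ℂ)) i j))]
  have hsum : ∑ i, ∑ j, Complex.abs ((H - w • 1) i j) ^ 2
      ≤ ∑ i, ∑ j, (2 * Complex.abs (H i j) ^ 2
          + 2 * Complex.abs ((w • (1 : Matrix ι ι ℂ)) i j) ^ 2) :=
    Finset.sum_le_sum fun i _ => Finset.sum_le_sum fun j _ => key i j
  refine le_trans hsum (le_of_eq ?_)
  have hone : ∑ i, ∑ j, Complex.abs ((w • (1 : Matrix ι ι ℂ)) i j) ^ 2
      = (Fintype.card ι : ℝ) * Complex.abs w ^ 2 := by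
    have hrow : ∀ i : ι, ∑ j, Complex.abs ((w • (1 : Matrix ι ι ℂ)) i j) ^ 2
        = Complex.abs w ^ 2 := by
      intro i
      rw [Finset.sum_eq_single i]
      · simp [Matrix.smul_apply, Matrix.one_apply]
      · intro b _ hb
        simp [Matrix.smul_apply, Matrix.one_apply, Ne.symm hb]
      · simp
    simp only [hrow, Finset.sum_const, Finset.card_univ, nsmul_eq_mul]
  simp only [Finset.sum_add_distrib, ← Finset.mul_sum]
  rw [hone]
  ring

lemma gfun_lower (hH : Hᴴ = H) {w : ℂ} (hw : w.im ≠ 0) :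
    (Fintype.card ι : ℝ) / (2 * frob H + 2 * (Fintype.card ι : ℝ) * Complex.abs w ^ 2)
      ≤ gfun H w := by
  have hn := card_pos' (ι := ι)
  have hu := isUnit_det_sub_smul hH hw
  have habs : 0 < Complex.abs w := by
    rw [AbsoluteValue.pos_iff]
    intro h0
    rw [h0] at hw
    simp at hw
  have hD : 0 < 2 * frob H + 2 * (Fintype.card ι : ℝ) * Complex.abs w ^ 2 := by
    have := frob_nonneg H
    positivity
  have hfb : 0 < frob (H - w • 1) := by
    apply frob_pos_of_ne_zero
    intro h0
    have h1 := Matrix.mul_nonsing_inv _ hu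
    rw [h0, Matrix.zero_mul] at h1
    have := congrFun (congrFun h1 (Classical.arbitrary ι)) (Classical.arbitrary ι)
    simp [Matrix.one_apply] at this
  have hcs : (Fintype.card ι : ℝ) ^ 2 ≤ frob ((H - w • 1)⁻¹) * frob (H - w • 1) := by
    have h := abs_trace_mul_sq_le ((H - w • 1)⁻¹) (H - w • 1)
    rw [Matrix.nonsing_inv_mul _ hu] at h
    have htr1 : ((1 : Matrix ι ι ℂ)).trace = (Fintype.card ι : ℂ) := by
      simp [Matrix.trace_one]
    rw [htr1] at h
    rw [Complex.abs_natCast] at h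
    exact h
  have hfrle := frob_sub_smul_le H w
  unfold gfun
  rw [div_le_div_iff₀ hD hn]
  have hfr0 : 0 ≤ frob ((H - w • 1)⁻¹) := frob_nonneg _
  nlinarith [hcs, hfrle, hfb, hn, hfr0, hD]

lemma sfun_diff (hH : Hᴴ = H) {w₁ w₂ : ℂ} (h₁ : w₁.im ≠ 0) (h₂ : w₂.im ≠ 0) :
    Complex.abs (sfun H w₁ - sfun H w₂) ^ 2
      ≤ Complex.abs (w₁ - w₂) ^ 2 * (gfun H w₁ * gfun H w₂) := by
  have hn := card_pos' (ι := ι)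
  have hdiff := res_sub hH h₁ h₂
  have htr := congrArg Matrix.trace hdiff
  rw [Matrix.trace_sub, Matrix.trace_smul] at htr
  have hs : sfun H w₁ - sfun H w₂
      = (w₁ - w₂) * ((H - w₁ • 1)⁻¹ * (H - w₂ • 1)⁻¹).trace / (Fintype.card ι : ℂ) := by
    unfold sfun
    rw [div_sub_div_same, htr, smul_eq_mul]
  have hcs := abs_trace_mul_sq_le ((H - w₁ • 1)⁻¹) ((H - w₂ • 1)⁻¹)
  rw [hs]
  rw [map_div₀, _root_.map_mul, Complex.abs_natCast, div_pow, mul_pow]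
  unfold gfun
  set T := Complex.abs (((H - w₁ • 1)⁻¹ * (H - w₂ • 1)⁻¹).trace) with hT
  set f₁ := frob ((H - w₁ • 1)⁻¹) with hf₁
  set f₂ := frob ((H - w₂ • 1)⁻¹) with hf₂
  have hne : (Fintype.card ι : ℝ) ≠ 0 := ne_of_gt hn
  rw [div_le_iff₀ (by positivity)]
  have hid : f₁ / (Fintype.card ι : ℝ) * (f₂ / (Fintype.card ι : ℝ))
      * (Fintype.card ι : ℝ) ^ 2 = f₁ * f₂ := by
    field_simp
  calc Complex.abs (w₁ - w₂) ^ 2 * T ^ 2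
      ≤ Complex.abs (w₁ - w₂) ^ 2 * (f₁ * f₂) := by gcongr
    _ = Complex.abs (w₁ - w₂) ^ 2
        * (f₁ / (Fintype.card ι : ℝ) * (f₂ / (Fintype.card ι : ℝ)))
        * (Fintype.card ι : ℝ) ^ 2 := by rw [mul_assoc, hid]

end Sfun

section FixedPoint

open Filter Topology

variable [Nonempty ι] {H : Matrix ι ι ℂ}

set_option maxHeartbeats 2000000 in
theorem scalar_exu (hH : Hᴴ = H) {z : ℂ} (hz : 0 < z.im) :
    ∃! m : ℂ, 0 < m.im ∧ sfun H (z + m) = m := by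
  have hn : 0 < (Fintype.card ι : ℝ) := card_pos'
  set c := z.im with hc
  have hc0 : 0 < c := hz
  set B : ℝ := 1 / c with hB
  have hB0 : 0 < B := by positivity
  set Φ : ℂ → ℂ := fun m => sfun H (z + m) with hΦ
  have him_w : ∀ m : ℂ, 0 < m.im → 0 < (z + m).im := by
    intro m hm
    simp only [Complex.add_im]
    linarith
  have hg : ∀ m : ℂ, 0 < m.im → (Φ m).im = (c + m.im) * gfun H (z + m) := by
    intro m hm
    have h := im_sfun hH (ne_of_gt (him_w m hm))
    simpa [hΦ, Complex.add_im] using h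
  have hΦim : ∀ m : ℂ, 0 < m.im → 0 < (Φ m).im := by
    intro m hm
    rw [hg m hm]
    exact mul_pos (by linarith) (gfun_pos hH (ne_of_gt (him_w m hm)))
  have hΦabs : ∀ m : ℂ, 0 < m.im → Complex.abs (Φ m) ≤ B := by
    intro m hm
    refine le_trans (abs_sfun_le hH (him_w m hm)) ?_
    rw [hB]
    refine one_div_le_one_div_of_le hc0 ?_
    simp only [Complex.add_im]
    linarith
  have hΦimB : ∀ m : ℂ, 0 < m.im → (Φ m).im ≤ B := fun m hm =>
    le_trans (Complex.im_le_abs _) (hΦabs m hm)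
  -- lower bound for the imaginary part along the orbit
  set B' : ℝ := max 1 B with hB'
  have hB'1 : (1:ℝ) ≤ B' := le_max_left _ _
  set D : ℝ := 2 * frob H + 2 * (Fintype.card ι : ℝ) * (Complex.abs z + B') ^ 2 with hD
  have habz : 0 < Complex.abs z + B' := by
    have := Complex.abs.nonneg z
    linarith
  have hD0 : 0 < D := by
    have h2 : 0 < (Complex.abs z + B') ^ 2 := pow_pos habz 2
    have h3 := frob_nonneg H
    have h4 := mul_pos hn h2
    rw [hD]
    nlinarith
  set ε : ℝ := c * ((Fintype.card ι : ℝ) / D) with hε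
  have hε0 : 0 < ε := mul_pos hc0 (div_pos hn hD0)
  have hlow : ∀ m : ℂ, 0 < m.im → Complex.abs m ≤ B' → ε ≤ (Φ m).im := by
    intro m hm hmB
    have hwim := him_w m hm
    have h1 := gfun_lower hH (ne_of_gt hwim)
    have hzm : Complex.abs (z + m) ≤ Complex.abs z + B' := by
      refine le_trans (Complex.abs.add_le _ _) ?_
      linarith
    have hden : 0 < 2 * frob H + 2 * (Fintype.card ι : ℝ) * Complex.abs (z + m) ^ 2 := by
      have habs : 0 < Complex.abs (z + m) := by
        rw [AbsoluteValue.pos_iff]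
        intro h0
        rw [h0] at hwim
        simp at hwim
      have := frob_nonneg H
      nlinarith [mul_pos hn (pow_pos habs 2)]
    have h2 : (Fintype.card ι : ℝ) / D
        ≤ (Fintype.card ι : ℝ)
          / (2 * frob H + 2 * (Fintype.card ι : ℝ) * Complex.abs (z + m) ^ 2) := by
      apply div_le_div_of_nonneg_left hn.le hden
      rw [hD]
      have hsq : Complex.abs (z + m) ^ 2 ≤ (Complex.abs z + B') ^ 2 := by
        nlinarith [Complex.abs.nonneg (z + m)]
      nlinarith [hn, hsq]
    have h3 : (Fintype.card ι : ℝ) / D ≤ gfun H (z + m) := le_trans h2 h1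
    rw [hg m hm, hε]
    have hg0 := gfun_pos hH (ne_of_gt hwim)
    calc c * ((Fintype.card ι : ℝ) / D) ≤ c * gfun H (z + m) := by
          exact mul_le_mul_of_nonneg_left h3 hc0.le
      _ ≤ (c + m.im) * gfun H (z + m) := by nlinarith [hg0, hm]
  -- the iteration sequence
  set t : ℕ → ℂ := fun k => Φ^[k] (Φ Complex.I) with ht
  have htsucc : ∀ k, t (k + 1) = Φ (t k) := by
    intro k
    rw [ht]
    exact Function.iterate_succ_apply' Φ k _
  have hI : (0:ℝ) < (Complex.I).im := by simp
  have hIabs : Complex.abs Complex.I ≤ B' := by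
    rw [Complex.abs_I]
    exact hB'1
  have hinv : ∀ k, 0 < (t k).im ∧ Complex.abs (t k) ≤ B ∧ (t k).im ≤ B ∧ ε ≤ (t k).im := by
    intro k
    induction k with
    | zero => exact ⟨hΦim _ hI, hΦabs _ hI, hΦimB _ hI, hlow _ hI hIabs⟩
    | succ k ih =>
      obtain ⟨h1, h2, h3, h4⟩ := ih
      rw [htsucc k]
      have habs' : Complex.abs (t k) ≤ B' := le_trans h2 (le_max_right 1 B)
      exact ⟨hΦim _ h1, hΦabs _ h1, hΦimB _ h1, hlow _ h1 habs'⟩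
  -- contraction
  set k₀ : ℝ := B / (c + B) with hk₀
  have hk₀0 : 0 ≤ k₀ := div_nonneg hB0.le (by linarith)
  have hk₀1 : k₀ < 1 := by
    rw [hk₀, div_lt_one (by linarith)]
    linarith
  have hfrac : ∀ x : ℝ, 0 < x → x ≤ B → x ≤ k₀ * (c + x) := by
    intro x hx hxB
    rw [hk₀, div_mul_eq_mul_div, le_div_iff₀ (by linarith)]
    nlinarith
  have hstep : ∀ a b : ℂ, 0 < a.im → a.im ≤ B → 0 < b.im → b.im ≤ B →
      dist (Φ a) (Φ b) ^ 2 * (a.im * b.im)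
        ≤ k₀ ^ 2 * dist a b ^ 2 * ((Φ a).im * (Φ b).im) := by
    intro a b ha haB hb hbB
    have hga0 := gfun_pos hH (ne_of_gt (him_w a ha))
    have hgb0 := gfun_pos hH (ne_of_gt (him_w b hb))
    have hd : dist (Φ a) (Φ b) ^ 2 ≤ dist a b ^ 2 * (gfun H (z + a) * gfun H (z + b)) := by
      rw [Complex.dist_eq, Complex.dist_eq]
      have h := sfun_diff hH (ne_of_gt (him_w a ha)) (ne_of_gt (him_w b hb))
      simpa [hΦ, add_sub_add_left_eq_sub, Complex.abs_apply] using h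
    have hpa := hfrac a.im ha haB
    have hpb := hfrac b.im hb hbB
    have hab : a.im * b.im ≤ k₀ ^ 2 * ((c + a.im) * (c + b.im)) := by
      have h1 : a.im * b.im ≤ (k₀ * (c + a.im)) * (k₀ * (c + b.im)) :=
        mul_le_mul hpa hpb hb.le (by nlinarith)
      nlinarith [h1]
    rw [hg a ha, hg b hb]
    calc dist (Φ a) (Φ b) ^ 2 * (a.im * b.im)
        ≤ (dist a b ^ 2 * (gfun H (z + a) * gfun H (z + b))) * (a.im * b.im) := by
          exact mul_le_mul_of_nonneg_right hd (by positivity)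
      _ ≤ (dist a b ^ 2 * (gfun H (z + a) * gfun H (z + b)))
            * (k₀ ^ 2 * ((c + a.im) * (c + b.im))) := by
          refine mul_le_mul_of_nonneg_left hab ?_
          positivity
      _ = k₀ ^ 2 * dist a b ^ 2
            * ((c + a.im) * gfun H (z + a) * ((c + b.im) * gfun H (z + b))) := by ring
  set E : ℕ → ℝ := fun k => dist (t k) (t (k + 1)) ^ 2 / ((t k).im * (t (k + 1)).im) with hE
  have hEstep : ∀ k, E (k + 1) ≤ k₀ ^ 2 * E k := by
    intro k
    have h1 := (hinv k).1
    have h3 := (hinv k).2.2.1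
    have h1' := (hinv (k + 1)).1
    have h3' := (hinv (k + 1)).2.2.1
    have h1'' := (hinv (k + 2)).1
    have hs := hstep (t k) (t (k + 1)) h1 h3 h1' h3'
    rw [← htsucc k, ← htsucc (k + 1)] at hs
    have hp : 0 < (t k).im * (t (k + 1)).im := mul_pos h1 h1'
    have hq : 0 < (t (k + 1)).im * (t (k + 2)).im := mul_pos h1' h1''
    rw [hE]
    dsimp only
    rw [div_le_iff₀ hq]
    have hident : k₀ ^ 2 * (dist (t k) (t (k + 1)) ^ 2 / ((t k).im * (t (k + 1)).im))
        * ((t (k + 1)).im * (t (k + 2)).im)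
        = (k₀ ^ 2 * dist (t k) (t (k + 1)) ^ 2 * ((t (k + 1)).im * (t (k + 2)).im))
          / ((t k).im * (t (k + 1)).im) := by
      ring
    rw [hident, le_div_iff₀ hp]
    calc dist (t (k + 1)) (t (k + 1 + 1)) ^ 2 * ((t k).im * (t (k + 1)).im)
        ≤ k₀ ^ 2 * dist (t k) (t (k + 1)) ^ 2 * ((t (k + 1)).im * (t (k + 2)).im) := by
          convert hs using 2
      _ = k₀ ^ 2 * dist (t k) (t (k + 1)) ^ 2 * ((t (k + 1)).im * (t (k + 2)).im) := rfl
  have hE0 : ∀ k, 0 ≤ E k := by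
    intro k
    have hp : 0 < (t k).im * (t (k + 1)).im := mul_pos (hinv k).1 (hinv (k + 1)).1
    exact div_nonneg (sq_nonneg _) hp.le
  have hEk : ∀ k, E k ≤ (k₀ ^ 2) ^ k * E 0 := by
    intro k
    induction k with
    | zero => simp
    | succ k ih =>
      calc E (k + 1) ≤ k₀ ^ 2 * E k := hEstep k
        _ ≤ k₀ ^ 2 * ((k₀ ^ 2) ^ k * E 0) := mul_le_mul_of_nonneg_left ih (sq_nonneg k₀)
        _ = (k₀ ^ 2) ^ (k + 1) * E 0 := by ring
  set C : ℝ := B * Real.sqrt (E 0) with hC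
  have hdistk : ∀ k, dist (t k) (t (k + 1)) ≤ C * k₀ ^ k := by
    intro k
    have h1 := (hinv k).1
    have h3 := (hinv k).2.2.1
    have h1' := (hinv (k + 1)).1
    have h3' := (hinv (k + 1)).2.2.1
    have hp : 0 < (t k).im * (t (k + 1)).im := mul_pos h1 h1'
    have hd2 : dist (t k) (t (k + 1)) ^ 2 = E k * ((t k).im * (t (k + 1)).im) := by
      rw [hE]
      dsimp only
      rw [div_mul_cancel₀ _ (ne_of_gt hp)]
    have hd2le : dist (t k) (t (k + 1)) ^ 2 ≤ (k₀ ^ k * B) ^ 2 * E 0 := by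
      rw [hd2]
      calc E k * ((t k).im * (t (k + 1)).im)
          ≤ ((k₀ ^ 2) ^ k * E 0) * (B * B) := by
            refine mul_le_mul (hEk k) ?_ hp.le ?_
            · exact mul_le_mul h3 h3' h1'.le hB0.le
            · exact mul_nonneg (by positivity) (hE0 0)
        _ = (k₀ ^ k * B) ^ 2 * E 0 := by ring
    have hsq := Real.sqrt_le_sqrt hd2le
    rw [Real.sqrt_sq dist_nonneg] at hsq
    rw [Real.sqrt_mul (sq_nonneg _), Real.sqrt_sq (by positivity)] at hsq
    calc dist (t k) (t (k + 1)) ≤ k₀ ^ k * B * Real.sqrt (E 0) := hsq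
      _ = C * k₀ ^ k := by rw [hC]; ring
  have hcauchy : CauchySeq t := cauchySeq_of_le_geometric k₀ C hk₀1 hdistk
  obtain ⟨m₀, hm₀⟩ := cauchySeq_tendsto_of_complete hcauchy
  have htim : Tendsto (fun k => (t k).im) atTop (nhds m₀.im) :=
    (Complex.continuous_im.tendsto m₀).comp hm₀
  have him₀ : ε ≤ m₀.im := ge_of_tendsto' htim fun k => (hinv k).2.2.2
  have hm₀pos : 0 < m₀.im := lt_of_lt_of_le hε0 him₀
  -- the limit is a fixed point
  have hK : ∀ a : ℂ, 0 < a.im → gfun H (z + a) ≤ 1 / c ^ 2 := by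
    intro a ha
    refine le_trans (gfun_le hH (him_w a ha)) ?_
    have h1 : c ≤ (z + a).im := by
      simp only [Complex.add_im]
      linarith
    have h2 : c ^ 2 ≤ (z + a).im ^ 2 := by nlinarith
    exact one_div_le_one_div_of_le (by positivity) h2
  have hcontr : ∀ a : ℂ, 0 < a.im → dist (Φ a) (Φ m₀) ≤ 1 / c ^ 2 * dist a m₀ := by
    intro a ha
    have hd2 : dist (Φ a) (Φ m₀) ^ 2 ≤ dist a m₀ ^ 2 * (gfun H (z + a) * gfun H (z + m₀)) := by
      rw [Complex.dist_eq, Complex.dist_eq]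
      have h := sfun_diff hH (ne_of_gt (him_w a ha)) (ne_of_gt (him_w m₀ hm₀pos))
      simpa [hΦ, add_sub_add_left_eq_sub, Complex.abs_apply] using h
    have hb : dist a m₀ ^ 2 * (gfun H (z + a) * gfun H (z + m₀))
        ≤ (1 / c ^ 2 * dist a m₀) ^ 2 := by
      have hk1 := hK a ha
      have hk2 := hK m₀ hm₀pos
      have g0a := (gfun_pos hH (ne_of_gt (him_w a ha))).le
      have g0b := (gfun_pos hH (ne_of_gt (him_w m₀ hm₀pos))).le
      have hgg : gfun H (z + a) * gfun H (z + m₀) ≤ 1 / c ^ 2 * (1 / c ^ 2) :=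
        mul_le_mul hk1 hk2 g0b (by positivity)
      calc dist a m₀ ^ 2 * (gfun H (z + a) * gfun H (z + m₀))
          ≤ dist a m₀ ^ 2 * (1 / c ^ 2 * (1 / c ^ 2)) :=
            mul_le_mul_of_nonneg_left hgg (sq_nonneg _)
        _ = (1 / c ^ 2 * dist a m₀) ^ 2 := by ring
    have hsq := Real.sqrt_le_sqrt (le_trans hd2 hb)
    rw [Real.sqrt_sq dist_nonneg, Real.sqrt_sq (by positivity)] at hsq
    exact hsq
  have hlim1 : Tendsto (fun k => t (k + 1)) atTop (nhds m₀) :=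
    hm₀.comp (tendsto_add_atTop_nat 1)
  have hdist0 : Tendsto (fun k => dist (t k) m₀) atTop (nhds 0) :=
    tendsto_iff_dist_tendsto_zero.mp hm₀
  have hlim2 : Tendsto (fun k => dist (t (k + 1)) (Φ m₀)) atTop (nhds 0) := by
    refine squeeze_zero (g := fun k => 1 / c ^ 2 * dist (t k) m₀) (fun k => dist_nonneg) (fun k => ?_) ?_
    · rw [htsucc k]
      exact hcontr (t k) (hinv k).1
    · have := hdist0.const_mul (1 / c ^ 2)
      rw [mul_zero] at this
      exact this
  have hlim3 : Tendsto (fun k => t (k + 1)) atTop (nhds (Φ m₀)) :=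
    tendsto_iff_dist_tendsto_zero.mpr hlim2
  have hfix : sfun H (z + m₀) = m₀ := tendsto_nhds_unique hlim3 hlim1
  -- uniqueness
  refine ⟨m₀, ⟨hm₀pos, hfix⟩, ?_⟩
  rintro m' ⟨h1', h2'⟩
  have key : ∀ m : ℂ, 0 < m.im → sfun H (z + m) = m →
      0 < gfun H (z + m) ∧ gfun H (z + m) < 1 := by
    intro m hm hfx
    have hgp := gfun_pos hH (ne_of_gt (him_w m hm))
    have hid := im_sfun hH (ne_of_gt (him_w m hm))
    rw [hfx] at hid
    simp only [Complex.add_im] at hid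
    refine ⟨hgp, ?_⟩
    by_contra hge
    push_neg at hge
    have h5 : c + m.im ≤ (c + m.im) * gfun H (z + m) :=
      le_mul_of_one_le_right (by linarith) hge
    nlinarith [h5, hm, hc0, hid]
  obtain ⟨hp1, hl1⟩ := key m' h1' h2'
  obtain ⟨hp2, hl2⟩ := key m₀ hm₀pos hfix
  by_contra hne
  have hd := sfun_diff hH (ne_of_gt (him_w m' h1')) (ne_of_gt (him_w m₀ hm₀pos))
  rw [h2', hfix] at hd
  have habs : 0 < Complex.abs (m' - m₀) := by
    rw [AbsoluteValue.pos_iff]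
    intro h0
    exact hne (sub_eq_zero.mp h0)
  have hcancel : Complex.abs ((z + m') - (z + m₀)) = Complex.abs (m' - m₀) := by
    rw [add_sub_add_left_eq_sub]
  rw [hcancel] at hd
  have hX : 0 < Complex.abs (m' - m₀) ^ 2 := pow_pos habs 2
  have hgg : gfun H (z + m') * gfun H (z + m₀) < 1 := by nlinarith
  nlinarith [mul_pos hX (sub_pos.mpr hgg), hd]

end FixedPoint

section Glue

lemma im_div_natCast (a : ℂ) (k : ℕ) : (a / (k : ℂ)).im = a.im / k := by
  rw [show ((k : ℂ)) = ((k : ℝ) : ℂ) by push_cast; ring, div_eq_mul_inv,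
    ← Complex.ofReal_inv, Complex.mul_im]
  simp only [Complex.ofReal_im, Complex.ofReal_re, mul_zero, zero_add]
  rw [div_eq_mul_inv]

lemma half_I_scalar (a : ℝ) :
    ((2 : ℂ) * Complex.I)⁻¹ * (((2 * a : ℝ) : ℂ) * Complex.I) = ((a : ℝ) : ℂ) := by
  have hI := Complex.I_ne_zero
  push_cast
  field_simp

lemma trace_pos_of_posdef [Nonempty ι] {P : Matrix ι ι ℂ} (hP : P.PosDef) :
    0 < P.trace := by
  have hdiag : ∀ i, 0 < P i i := by
    intro i
    have hx : (Pi.single i 1 : ι → ℂ) ≠ 0 := by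
      intro h0
      have := congrFun h0 i
      simp at this
    have h := hP.dotProduct_mulVec_pos hx
    rw [Matrix.mulVec_single] at h
    have hs : star (Pi.single i 1 : ι → ℂ) = Pi.single i 1 := by
      ext j
      by_cases hj : j = i <;> simp [Pi.single_apply, hj]
    rw [hs, single_dotProduct] at h
    simpa using h
  have htr : P.trace = ∑ i, P i i := rfl
  rw [htr]
  exact Finset.sum_pos (fun i _ => hdiag i) Finset.univ_nonempty

lemma posdef_smul_conj {M : Matrix ι ι ℂ} (hM : IsUnit M.det) {r : ℝ} (hr : 0 < r) :
    (((r : ℝ) : ℂ) • (M * Mᴴ)).PosDef := by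
  refine Matrix.posDef_iff_dotProduct_mulVec.mpr ⟨?_, ?_⟩
  · show (((r : ℝ) : ℂ) • (M * Mᴴ))ᴴ = _
    rw [Matrix.conjTranspose_smul, Matrix.conjTranspose_mul,
      Matrix.conjTranspose_conjTranspose]
    congr 1
    simp [Complex.star_def, Complex.conj_ofReal]
  · intro x hx
    have hMH : IsUnit (Mᴴ).det := by
      rw [Matrix.det_conjTranspose]
      exact hM.star
    have hy : Mᴴ *ᵥ x ≠ 0 := by
      intro h0
      apply hx
      have hinv : (Mᴴ)⁻¹ *ᵥ (Mᴴ *ᵥ x) = x := by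
        rw [Matrix.mulVec_mulVec, Matrix.nonsing_inv_mul _ hMH, Matrix.one_mulVec]
      rw [h0, Matrix.mulVec_zero] at hinv
      exact hinv.symm
    have hsy : star (Mᴴ *ᵥ x) = star x ᵥ* M := by
      rw [Matrix.star_mulVec, Matrix.conjTranspose_conjTranspose]
    have hdot : star x ⬝ᵥ ((((r : ℝ) : ℂ) • (M * Mᴴ)) *ᵥ x)
        = ((r : ℝ) : ℂ) * (star (Mᴴ *ᵥ x) ⬝ᵥ (Mᴴ *ᵥ x)) := by
      rw [Matrix.smul_mulVec, dotProduct_smul, smul_eq_mul]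
      congr 1
      rw [← Matrix.mulVec_mulVec, Matrix.dotProduct_mulVec, ← hsy]
    rw [hdot, star_dot_self, ← Complex.ofReal_mul, Complex.zero_lt_real]
    exact mul_pos hr (sum_normSq_pos hy)

end Glue

end MDEAux

set_option maxHeartbeats 1000000 in
/-- **Existence and uniqueness for the matrix Dyson equation.** -/
theorem mde_existence_uniqueness (N : ℕ) (hN : 1 ≤ N)
    (𝒜 : Matrix (Fin N) (Fin N) ℂ) (zhat : ℂ) (hz : 0 < zhat.im) :
    ∃! M : Matrix (Fin N ⊕ Fin N) (Fin N ⊕ Fin N) ℂ, IsMDESolution 𝒜 zhat M := by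
  haveI hne : Nonempty (Fin N ⊕ Fin N) := ⟨Sum.inl ⟨0, by omega⟩⟩
  have hH : (hermitize 𝒜)ᴴ = hermitize 𝒜 := by
    unfold hermitize
    rw [Matrix.fromBlocks_conjTranspose]
    simp
  obtain ⟨m, ⟨hmim, hmfix⟩, hmuniq⟩ := MDEAux.scalar_exu hH hz
  set H := hermitize 𝒜 with hHdef
  set w := zhat + m with hwdef
  have hwim : 0 < w.im := by
    rw [hwdef]
    simp only [Complex.add_im]
    linarith
  have hu : IsUnit (H - w • 1).det := MDEAux.isUnit_det_sub_smul hH (ne_of_gt hwim)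
  set M := (H - w • (1 : Matrix (Fin N ⊕ Fin N) (Fin N ⊕ Fin N) ℂ))⁻¹ with hM
  have hMdet : IsUnit M.det := Matrix.isUnit_nonsing_inv_det _ hu
  have hMinv : M⁻¹ = H - w • 1 := Matrix.nonsing_inv_nonsing_inv _ hu
  have htr : ntrace M = m := hmfix
  have hsplit : H - w • (1 : Matrix (Fin N ⊕ Fin N) (Fin N ⊕ Fin N) ℂ)
      = H - zhat • 1 - m • 1 := by
    rw [hwdef, add_smul, sub_sub]
  have hwconj : (starRingEnd ℂ w).im ≠ 0 := by
    simp only [Complex.conj_im]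
    exact neg_ne_zero.mpr (ne_of_gt hwim)
  have hdiffM : M - Mᴴ = (w - starRingEnd ℂ w) • (M * Mᴴ) := by
    rw [hM, MDEAux.conjTranspose_res hH]
    exact MDEAux.res_sub hH (ne_of_gt hwim) hwconj
  have hIm : imPart M = ((w.im : ℝ) : ℂ) • (M * Mᴴ) := by
    unfold imPart
    rw [hdiffM, smul_smul, Complex.sub_conj, MDEAux.half_I_scalar]
  have hpos : (imPart M).PosDef := by
    rw [hIm]
    exact MDEAux.posdef_smul_conj hMdet hwim
  refine ⟨M, ⟨hMdet, hpos, ?_⟩, ?_⟩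
  · rw [hMinv, htr]
    exact hsplit
  · rintro M' ⟨hdet', hpos', heq'⟩
    set m' := ntrace M' with hm'
    have htrP : (imPart M').trace = (((M'.trace).im : ℝ) : ℂ) := by
      unfold imPart
      rw [Matrix.trace_smul, Matrix.trace_sub, Matrix.trace_conjTranspose, smul_eq_mul]
      rw [show (star M'.trace) = (starRingEnd ℂ) M'.trace from rfl]
      rw [Complex.sub_conj, MDEAux.half_I_scalar]
    have him' : 0 < m'.im := by
      have h0 := MDEAux.trace_pos_of_posdef hpos'
      rw [htrP] at h0
      have h1 : 0 < (M'.trace).im := Complex.zero_lt_real.mp h0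
      rw [hm']
      unfold ntrace
      rw [MDEAux.im_div_natCast]
      have hcard : 0 < (Fintype.card (Fin N ⊕ Fin N) : ℝ) := MDEAux.card_pos'
      positivity
    set w' := zhat + m' with hw'
    have hw'im : 0 < w'.im := by
      rw [hw']
      simp only [Complex.add_im]
      linarith
    have hMinv' : M'⁻¹ = H - w' • 1 := by
      rw [heq', hw', add_smul, sub_sub]
    have hM'eq : M' = (H - w' • 1)⁻¹ := by
      rw [← hMinv']
      exact (Matrix.nonsing_inv_nonsing_inv _ hdet').symm
    have hfix' : MDEAux.sfun H (zhat + m') = m' := by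
      show ntrace ((H - (zhat + m') • 1)⁻¹) = m'
      rw [← hw', ← hM'eq]
    have hmm : m' = m := hmuniq m' ⟨him', hfix'⟩
    rw [hM'eq, hw', hmm, ← hwdef]
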